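/- arXiv:2210.04418 — 5 statements merged into one kernel-verified Lean document; each statement's English description precedes it below -/
import Mathlib

section
/- Let X be a compact convex subset of ℝⁿ, V̂, V, D continuous real-valued functionals where D assigns a cost to each probability measure on X. Suppose Φ* maximizes Φ ↦ ∫V dΦ - D(Φ) over probability measures with barycenter μ₀, and Φ̂* maximizes Φ ↦ ∫V̂ dΦ - D(Φ) over the same set, with Φ̂* strictly better than Φ* for the V̂-problem (strict inequality of objectives). Then it is not the case that ∫(V̂-V) dΦ̂* ≤ ∫(V̂-V) dΦ*; in particular if V̂ - V is convex, Φ̂* cannot be a strict mean-preserving contraction of Φ*. -/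
open MeasureTheory

/- Revealed preference: optimality of `Φ*` for `V`, tested against `Φ̂*`, gives
`∫V dΦ̂* - D Φ̂* ≤ ∫V dΦ* - D Φ*`; adding `∫(V̂-V) dΦ̂* ≤ ∫(V̂-V) dΦ*` turns this into
`∫V̂ dΦ̂* - D Φ̂* ≤ ∫V̂ dΦ* - D Φ*`, contradicting the strict gain. -/

theorem ContinuousOn.integrable_of_ae_mem {α E : Type*} [TopologicalSpace α] [T2Space α]
    [MeasurableSpace α] [OpensMeasurableSpace α] [NormedAddCommGroup E]
    {μ : Measure α} [IsFiniteMeasure μ] {K : Set α} {f : α → E}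
    (hK : IsCompact K) (hf : ContinuousOn f K) (hμK : ∀ᵐ x ∂μ, x ∈ K) :
    Integrable f μ := by
  simpa only [IntegrableOn, Measure.restrict_eq_self_of_ae_mem hμK]
    using hf.integrableOn_compact (μ := μ) hK

theorem stmt1_general {n : ℕ} (X : Set (Fin n → ℝ)) (hXcomp : IsCompact X)
    (Vhat V : (Fin n → ℝ) → ℝ)
    (hVhat : ContinuousOn Vhat X) (hV : ContinuousOn V X)
    (D : Measure (Fin n → ℝ) → ℝ) (μ₀ : Fin n → ℝ)
    (Φstar Φhatstar : Measure (Fin n → ℝ))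
    [IsProbabilityMeasure Φstar] [IsProbabilityMeasure Φhatstar]
    (hΦ : Φstar X = 1)
    (hΦh : Φhatstar X = 1) (hΦhbary : ∫ x, x ∂Φhatstar = μ₀)
    (hmax : ∀ Ψ : Measure (Fin n → ℝ), IsProbabilityMeasure Ψ → Ψ X = 1 →
      (∫ x, x ∂Ψ = μ₀) → (∫ x, V x ∂Ψ) - D Ψ ≤ (∫ x, V x ∂Φstar) - D Φstar)
    (hstrict : (∫ x, Vhat x ∂Φstar) - D Φstar < (∫ x, Vhat x ∂Φhatstar) - D Φhatstar) :
    ¬ ((∫ x, (Vhat x - V x) ∂Φhatstar) ≤ ∫ x, (Vhat x - V x) ∂Φstar) := by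
  intro hle
  have hX : ∀ {Ψ : Measure (Fin n → ℝ)} [IsProbabilityMeasure Ψ], Ψ X = 1 → ∀ᵐ x ∂Ψ, x ∈ X :=
    fun h ↦ (mem_ae_iff_prob_eq_one hXcomp.measurableSet).2 h
  rw [integral_sub (hVhat.integrable_of_ae_mem hXcomp (hX hΦh))
      (hV.integrable_of_ae_mem hXcomp (hX hΦh)),
    integral_sub (hVhat.integrable_of_ae_mem hXcomp (hX hΦ))
      (hV.integrable_of_ae_mem hXcomp (hX hΦ))] at hle
  linarith [hmax Φhatstar inferInstance hΦh hΦhbary]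

/-- If `Φ*` maximizes `∫V dΦ - D Φ` over probability measures on `X`
with barycenter `μ₀`, `Φ̂*` maximizes `∫V̂ dΦ - D Φ`, and `Φ̂*` is strictly better
than `Φ*` for the `V̂`-problem, then `∫(V̂-V) dΦ̂* ≤ ∫(V̂-V) dΦ*` fails (so, when
`V̂ - V` is convex, `Φ̂*` cannot be a strict mean-preserving contraction of `Φ*`). -/
theorem stmt1 {n : ℕ} (X : Set (Fin n → ℝ)) (hXcomp : IsCompact X) (hXconv : Convex ℝ X)
    (Vhat V : (Fin n → ℝ) → ℝ)
    (hVhat : ContinuousOn Vhat X) (hV : ContinuousOn V X)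
    (D : Measure (Fin n → ℝ) → ℝ) (μ₀ : Fin n → ℝ)
    (Φstar Φhatstar : Measure (Fin n → ℝ))
    [IsProbabilityMeasure Φstar] [IsProbabilityMeasure Φhatstar]
    (hΦ : Φstar X = 1) (hΦbary : ∫ x, x ∂Φstar = μ₀)
    (hΦh : Φhatstar X = 1) (hΦhbary : ∫ x, x ∂Φhatstar = μ₀)
    (hmax : ∀ Ψ : Measure (Fin n → ℝ), IsProbabilityMeasure Ψ → Ψ X = 1 →
      (∫ x, x ∂Ψ = μ₀) → (∫ x, V x ∂Ψ) - D Ψ ≤ (∫ x, V x ∂Φstar) - D Φstar)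
    (hmaxhat : ∀ Ψ : Measure (Fin n → ℝ), IsProbabilityMeasure Ψ → Ψ X = 1 →
      (∫ x, x ∂Ψ = μ₀) → (∫ x, Vhat x ∂Ψ) - D Ψ ≤ (∫ x, Vhat x ∂Φhatstar) - D Φhatstar)
    (hstrict : (∫ x, Vhat x ∂Φstar) - D Φstar < (∫ x, Vhat x ∂Φhatstar) - D Φhatstar) :
    ¬ ((∫ x, (Vhat x - V x) ∂Φhatstar) ≤ ∫ x, (Vhat x - V x) ∂Φstar) :=
  stmt1_general X hXcomp Vhat V hVhat hV D μ₀ Φstar Φhatstar hΦ hΦh hΦhbary hmax hstrict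
end

section
/- Let Δ be the simplex over a finite state space, A a finite action set with value function V, and Â ⊊ A a nonempty subset with value function V̂ ≤ V. Suppose there exists a_i ∈ Â and μ' with 𝔼_{μ'} u(a_i,·) > max_{a∈A∖{a_i}} 𝔼_{μ'} u(a,·) (a leftover), and there exists a_j ∈ A∖Â and μ with 𝔼_μ u(a_j,·) > max_{a∈A∖{a_j}} 𝔼_μ u(a,·) (the removal is consequential). Then V̂ - V is not convex. -/
/-!
Put `f = V̂ - V`. At `μ`, where the removed action `a_j` is strictly optimal, `f μ < 0`. Strict
optimality of the leftover `a_i` at `μ'` is an open condition, so it persists at some `μ₀` of the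
open segment from `μ` to `μ'`; there `V μ₀ = 𝔼_{μ₀} u(a_i, ·) ≤ V̂ μ₀`, so `f μ < 0 ≤ f μ₀`. For a
convex `f` this forces `f μ₀ < f μ'`, contradicting `f μ' ≤ 0`.
-/

open Filter Topology

lemma eventually_forall_ne_lt_of_continuous {X A β : Type*} [TopologicalSpace X] [Finite A]
    [LinearOrder β] [TopologicalSpace β] [OrderClosedTopology β] {g : A → X → β}
    (hg : ∀ a, Continuous (g a)) {a₀ : A} {x : X} (hx : ∀ a ≠ a₀, g a x < g a₀ x) :
    ∀ᶠ y in 𝓝 x, ∀ a ≠ a₀, g a y < g a₀ y := by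
  refine eventually_all.2 fun a => ?_
  by_cases ha : a = a₀
  · exact Eventually.of_forall fun _ h => absurd ha h
  · exact ((hg a).continuousAt.eventually_lt (hg a₀).continuousAt (hx a ha)).mono
      fun _ hy _ => hy

lemma Filter.Eventually.exists_mem_openSegment (𝕜 : Type*) {E : Type*} [Ring 𝕜] [LinearOrder 𝕜]
    [IsStrictOrderedRing 𝕜] [DenselyOrdered 𝕜] [TopologicalSpace 𝕜] [OrderTopology 𝕜]
    [AddCommGroup E] [TopologicalSpace E] [ContinuousAdd E] [Module 𝕜 E] [ContinuousSMul 𝕜 E]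
    {P : E → Prop} {y : E} (hP : ∀ᶠ z in 𝓝 y, P z) (x : E) : ∃ z ∈ openSegment 𝕜 x y, P z := by
  obtain ⟨z, hPz, hz⟩ :=
    mem_closure_iff_nhds.1 (segment_subset_closure_openSegment (right_mem_segment 𝕜 x y)) _ hP
  exact ⟨z, hz, hPz⟩

lemma iSup_le_finset_sup'_of_forall_le {A α : Type*} [ConditionallyCompleteLattice α]
    {s : Finset A} (hs : s.Nonempty) {g : A → α} {a₀ : A} (ha₀ : a₀ ∈ s)
    (hmax : ∀ a, g a ≤ g a₀) : ⨆ a, g a ≤ s.sup' hs g :=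
  have : Nonempty A := ⟨a₀⟩
  (ciSup_le hmax).trans (s.le_sup' g ha₀)

theorem stmt8_general {Θ : Type*} [Fintype Θ] {A : Type*} [Fintype A]
    (u : A → Θ → ℝ) (Ahat : Finset A) (hne : Ahat.Nonempty)
    (V Vh : (Θ → ℝ) → ℝ)
    (hV : ∀ μ, V μ = ⨆ a, ∑ θ, μ θ * u a θ)
    (hVh : ∀ μ, Vh μ = Ahat.sup' hne (fun a => ∑ θ, μ θ * u a θ))
    (hVhleV : ∀ μ ∈ stdSimplex ℝ Θ, Vh μ ≤ V μ)
    (hleftover : ∃ ai ∈ Ahat, ∃ μ' ∈ stdSimplex ℝ Θ,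
      ∀ a ≠ ai, ∑ θ, μ' θ * u a θ < ∑ θ, μ' θ * u ai θ)
    (hconseq : ∃ aj ∉ Ahat, ∃ μ ∈ stdSimplex ℝ Θ,
      ∀ a ≠ aj, ∑ θ, μ θ * u a θ < ∑ θ, μ θ * u aj θ) :
    ¬ ConvexOn ℝ (stdSimplex ℝ Θ) (fun μ => Vh μ - V μ) := by
  intro hconv
  obtain ⟨ai, hai, μ', hμ', hai_opt⟩ := hleftover
  obtain ⟨aj, haj, μ, hμ, haj_opt⟩ := hconseq
  have hμ_neg : Vh μ - V μ < 0 := by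
    rw [hV, hVh, sub_neg]
    exact ((Finset.sup'_lt_iff _).2 fun a ha => haj_opt a (ne_of_mem_of_not_mem ha haj)).trans_le
      (le_ciSup (Finite.bddAbove_range fun a => ∑ θ, μ θ * u a θ) aj)
  obtain ⟨μ₀, hμ₀, hai_opt₀⟩ :=
    (eventually_forall_ne_lt_of_continuous (g := fun a ν => ∑ θ, ν θ * u a θ)
      (fun a => by fun_prop) hai_opt).exists_mem_openSegment ℝ μ
  have hμ₀_nonneg : 0 ≤ Vh μ₀ - V μ₀ := by
    rw [hV, hVh, sub_nonneg]
    refine iSup_le_finset_sup'_of_forall_le hne hai fun a => ?_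
    rcases eq_or_ne a ai with rfl | ha
    exacts [le_rfl, (hai_opt₀ a ha).le]
  have hμ'_pos : 0 < Vh μ' - V μ' :=
    hμ₀_nonneg.trans_lt (hconv.lt_right_of_left_lt hμ hμ' hμ₀ (hμ_neg.trans_le hμ₀_nonneg))
  exact hμ'_pos.not_ge (sub_nonpos.2 (hVhleV μ' hμ'))

/-- removing actions from a finite decision problem, if some remaining
action is undominated in the original problem (a leftover) and some removed action is
undominated (the removal is consequential), then `V̂ - V` is not convex. -/
theorem stmt8 {Θ : Type*} [Fintype Θ] {A : Type*} [Fintype A] [Nonempty A]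
    (u : A → Θ → ℝ) (Ahat : Finset A) (hne : Ahat.Nonempty) (hprop : Ahat ⊂ Finset.univ)
    (V Vh : (Θ → ℝ) → ℝ)
    (hV : ∀ μ, V μ = ⨆ a, ∑ θ, μ θ * u a θ)
    (hVh : ∀ μ, Vh μ = Ahat.sup' hne (fun a => ∑ θ, μ θ * u a θ))
    (hVhleV : ∀ μ ∈ stdSimplex ℝ Θ, Vh μ ≤ V μ)
    (hleftover : ∃ ai ∈ Ahat, ∃ μ' ∈ stdSimplex ℝ Θ,
      ∀ a ≠ ai, ∑ θ, μ' θ * u a θ < ∑ θ, μ' θ * u ai θ)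
    (hconseq : ∃ aj ∉ Ahat, ∃ μ ∈ stdSimplex ℝ Θ,
      ∀ a ≠ aj, ∑ θ, μ θ * u a θ < ∑ θ, μ θ * u aj θ) :
    ¬ ConvexOn ℝ (stdSimplex ℝ Θ) (fun μ => Vh μ - V μ) :=
  stmt8_general u Ahat hne V Vh hV hVh hVhleV hleftover hconseq
end

section
/- Let Δ be the simplex over a finite state space, μ₀ in the interior of Δ, and V̂, V : Δ → ℝ continuous. Suppose that for every probability measure F on Δ with barycenter μ₀, ∫(V̂ - V) dF ≥ V̂(μ₀) - V(μ₀). Then there exists an affine function ℓ such that V̂(μ₀) + ℓ(μ₀) = V(μ₀) and V̂(μ) + ℓ(μ) ≥ V(μ) for all μ ∈ Δ. -/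
/-!
Write `W = V̂ - V`. Testing the hypothesis on finitely supported measures shows that `W μ₀` is at
most every convex combination `∑ wᵢ W zᵢ` with barycenter `μ₀`, i.e. `W` agrees at `μ₀` with its
lower convex envelope. So `(μ₀, W μ₀)` is a boundary point of the convex hull of the epigraph of
`W`, and a supporting hyperplane there is the graph of an affine minorant of `W` touching it at
`μ₀`; it is not vertical as long as `μ₀` is an interior point. The simplex has empty interior in
`Θ → ℝ`, so `W` is first composed with the projection onto the hyperplane `∑ θ, y θ = 1` along
`μ₀`, which makes `μ₀` an interior point of the domain.
-/

open MeasureTheory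

-- This says `f x₀ = f̆ x₀`, where `f̆` is the lower convex envelope of `f` on `s`.
def ConvexEnvelopeEqAt {E : Type*} [AddCommGroup E] [Module ℝ E] (s : Set E) (f : E → ℝ)
    (x₀ : E) : Prop :=
  ∀ {ι : Type} (t : Finset ι) (w : ι → ℝ) (z : ι → E), (∀ i ∈ t, 0 ≤ w i) →
    ∑ i ∈ t, w i = 1 → (∀ i ∈ t, z i ∈ s) → ∑ i ∈ t, w i • z i = x₀ →
    f x₀ ≤ ∑ i ∈ t, w i * f (z i)

section Dirac

variable {α : Type*} [MeasurableSpace α] {ι : Type*} {t : Finset ι} {w : ι → ℝ}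

theorem integral_finset_sum_smul_dirac [MeasurableSingletonClass α] {E : Type*}
    [NormedAddCommGroup E] [NormedSpace ℝ E] [CompleteSpace E]
    (hw : ∀ i ∈ t, 0 ≤ w i) (z : ι → α) (f : α → E) :
    ∫ x, f x ∂(∑ i ∈ t, ENNReal.ofReal (w i) • Measure.dirac (z i)) = ∑ i ∈ t, w i • f (z i) := by
  rw [integral_finsetSum_measure fun i _ ↦
    ((integrable_const (f (z i))).congr (ae_eq_dirac f).symm).smul_measure ENNReal.ofReal_ne_top]
  refine Finset.sum_congr rfl fun i hi ↦ ?_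
  rw [integral_smul_measure, integral_dirac, ENNReal.toReal_ofReal (hw i hi)]

theorem finset_sum_smul_dirac_apply_eq_one (hw : ∀ i ∈ t, 0 ≤ w i) (hw₁ : ∑ i ∈ t, w i = 1)
    {z : ι → α} {A : Set α} (hz : ∀ i ∈ t, z i ∈ A) :
    (∑ i ∈ t, ENNReal.ofReal (w i) • Measure.dirac (z i)) A = 1 := by
  simp only [Measure.finsetSum_apply, Measure.smul_apply, smul_eq_mul]
  rw [Finset.sum_congr rfl fun i hi ↦ by rw [Measure.dirac_apply_of_mem (hz i hi), mul_one],
    ← ENNReal.ofReal_sum_of_nonneg hw, hw₁, ENNReal.ofReal_one]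

end Dirac

theorem convexEnvelopeEqAt_of_le_integral {E : Type*} [NormedAddCommGroup E] [NormedSpace ℝ E]
    [CompleteSpace E] [MeasurableSpace E] [MeasurableSingletonClass E] {s : Set E} {f : E → ℝ}
    {x₀ : E} (h : ∀ F : Measure E, IsProbabilityMeasure F → F s = 1 → ∫ x, x ∂F = x₀ →
      f x₀ ≤ ∫ x, f x ∂F) :
    ConvexEnvelopeEqAt s f x₀ := by
  intro ι t w z hw hw₁ hz hbar
  have hF := h _ ⟨finset_sum_smul_dirac_apply_eq_one hw hw₁ fun i _ ↦ Set.mem_univ (z i)⟩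
    (finset_sum_smul_dirac_apply_eq_one hw hw₁ hz)
    (by rw [integral_finset_sum_smul_dirac hw z fun x ↦ x, ← hbar])
  simpa only [integral_finset_sum_smul_dirac hw z f, smul_eq_mul] using hF

theorem ConvexEnvelopeEqAt.comp_affineMap {E F : Type*} [AddCommGroup E] [Module ℝ E]
    [AddCommGroup F] [Module ℝ F] {s : Set F} {f : F → ℝ} (P : E →ᵃ[ℝ] F) {x₀ : E}
    (h : ConvexEnvelopeEqAt s f (P x₀)) : ConvexEnvelopeEqAt (P ⁻¹' s) (f ∘ P) x₀ := by
  intro ι t w z hw hw₁ hz hbar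
  refine h t w (P ∘ z) hw hw₁ hz ?_
  rw [← hbar, ← t.affineCombination_eq_linear_combination _ _ hw₁,
    ← t.affineCombination_eq_linear_combination _ _ hw₁, t.map_affineCombination _ _ hw₁]

theorem ConvexEnvelopeEqAt.le_snd_of_mem_convexHull {E : Type*} [AddCommGroup E] [Module ℝ E]
    {s : Set E} {f : E → ℝ} {x₀ : E} (h : ConvexEnvelopeEqAt s f x₀) {p : E × ℝ}
    (hp : p ∈ convexHull ℝ {q : E × ℝ | q.1 ∈ s ∧ f q.1 ≤ q.2}) (hp₁ : p.1 = x₀) :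
    f x₀ ≤ p.2 := by
  rw [convexHull_eq] at hp
  obtain ⟨ι, t, w, z, hw, hw₁, hz, rfl⟩ := hp
  rw [Finset.centerMass_eq_of_sum_1 _ _ hw₁] at hp₁ ⊢
  rw [Prod.fst_sum] at hp₁
  rw [Prod.snd_sum]
  calc f x₀ ≤ ∑ i ∈ t, w i * f (z i).1 :=
        h t w (fun i ↦ (z i).1) hw hw₁ (fun i hi ↦ (hz i hi).1) hp₁
    _ ≤ ∑ i ∈ t, (w i • z i).2 :=
        Finset.sum_le_sum fun i hi ↦ mul_le_mul_of_nonneg_left (hz i hi).2 (hw i hi)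

theorem Convex.exists_supporting_of_notMem_interior {F : Type*} [NormedAddCommGroup F]
    [NormedSpace ℝ F] {K : Set F} (hK : Convex ℝ K) {p q : F} (hp : p ∉ interior K)
    (hq : q ∈ interior K) :
    ∃ φ : StrongDual ℝ F, φ q < φ p ∧ ∀ a ∈ K, φ a ≤ φ p := by
  obtain ⟨φ, hφ⟩ := geometric_hahn_banach_open_point hK.interior isOpen_interior hp
  refine ⟨φ, hφ q hq, fun a ha ↦ ?_⟩
  refine closure_minimal (fun b hb ↦ (hφ b hb).le) (isClosed_Iic.preimage φ.continuous) ?_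
  rw [hK.closure_interior_eq_closure_of_nonempty_interior ⟨q, hq⟩]
  exact subset_closure ha

theorem ConvexEnvelopeEqAt.notMem_interior_convexHull {E : Type*} [NormedAddCommGroup E]
    [NormedSpace ℝ E] {s : Set E} {f : E → ℝ} {x₀ : E} (h : ConvexEnvelopeEqAt s f x₀) :
    (x₀, f x₀) ∉ interior (convexHull ℝ {q : E × ℝ | q.1 ∈ s ∧ f q.1 ≤ q.2}) := by
  intro hmem
  have hlim : Filter.Tendsto (fun t : ℝ ↦ (x₀, t)) (nhdsWithin (f x₀) (Set.Iio (f x₀)))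
      (nhds (x₀, f x₀)) :=
    (Continuous.prodMk_right x₀).continuousAt.tendsto.mono_left nhdsWithin_le_nhds
  obtain ⟨t, htK, ht⟩ :=
    ((hlim.eventually (isOpen_interior.mem_nhds hmem)).and self_mem_nhdsWithin).exists
  exact absurd (h.le_snd_of_mem_convexHull (interior_subset htK) rfl) (not_le.2 ht)

theorem ConvexEnvelopeEqAt.exists_subgradient {E : Type*} [NormedAddCommGroup E]
    [NormedSpace ℝ E] {s : Set E} {f : E → ℝ} {x₀ : E} (h : ConvexEnvelopeEqAt s f x₀)
    (hx₀ : x₀ ∈ interior s) (hf : BddAbove (f '' s)) :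
    ∃ g : StrongDual ℝ E, ∀ x ∈ s, f x₀ + g (x - x₀) ≤ f x := by
  obtain ⟨T, hT⟩ := hf
  have hfT : ∀ x ∈ s, f x ≤ T := fun x hx ↦ hT ⟨x, hx, rfl⟩
  have hK : interior s ×ˢ Set.Ioi T ⊆
      interior (convexHull ℝ {q : E × ℝ | q.1 ∈ s ∧ f q.1 ≤ q.2}) :=
    interior_maximal (fun q hq ↦ subset_convexHull ℝ _
      ⟨interior_subset hq.1, (hfT _ (interior_subset hq.1)).trans hq.2.le⟩)
      (isOpen_interior.prod isOpen_Ioi)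
  have hx₀T := hK (Set.mk_mem_prod hx₀ (lt_add_one T))
  obtain ⟨φ, hφ₀, hφ⟩ := (convex_convexHull ℝ _).exists_supporting_of_notMem_interior
    h.notMem_interior_convexHull hx₀T
  set β := φ (0, 1)
  have hsplit : ∀ x t, φ (x, t) = φ (x, 0) + t * β := by
    intro x t
    rw [← smul_eq_mul, ← map_smul, ← map_add]
    simp
  -- The hyperplane is not vertical: it separates `(x₀, T + 1)` strictly from `(x₀, f x₀)`.
  have hβ : β < 0 := by
    rw [hsplit, hsplit x₀ (f x₀)] at hφ₀
    nlinarith [hfT x₀ (interior_subset hx₀)]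
  refine ⟨(-β)⁻¹ • φ.comp (ContinuousLinearMap.inl ℝ E ℝ), fun x hx ↦ ?_⟩
  have hx := hφ (x, f x) (subset_convexHull ℝ _ ⟨hx, le_rfl⟩)
  rw [hsplit, hsplit x₀ (f x₀)] at hx
  calc f x₀ + ((-β)⁻¹ • φ.comp (ContinuousLinearMap.inl ℝ E ℝ)) (x - x₀)
      = f x₀ + (-β)⁻¹ * (φ (x, 0) - φ (x₀, 0)) := by
        rw [smul_apply, ContinuousLinearMap.comp_apply, ContinuousLinearMap.inl_apply, ← map_sub,
          Prod.mk_sub_mk, sub_zero, smul_eq_mul]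
    _ ≤ f x₀ + (-β)⁻¹ * (-β * (f x - f x₀)) := by
        gcongr
        · exact inv_nonneg.2 (neg_nonneg.2 hβ.le)
        · linarith
    _ = f x := by
        field_simp [hβ.ne]
        ring

theorem exists_one_lt_lineMap_mem_of_mem_intrinsicInterior {E : Type*} [NormedAddCommGroup E]
    [NormedSpace ℝ E] {s : Set E} {x x₀ : E} (hx₀ : x₀ ∈ intrinsicInterior ℝ s) (hx : x ∈ s) :
    ∃ c : ℝ, 1 < c ∧ AffineMap.lineMap x x₀ c ∈ s := by
  obtain ⟨y, hy, rfl⟩ := hx₀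
  let ψ : ℝ → affineSpan ℝ s := fun c ↦
    ⟨AffineMap.lineMap x y c, AffineMap.lineMap_mem c (subset_affineSpan ℝ s hx) y.2⟩
  have hψ : Continuous ψ := AffineMap.lineMap_continuous.subtype_mk _
  have hψ₁ : ψ 1 = y := Subtype.ext (AffineMap.lineMap_apply_one _ _)
  have hev : ∀ᶠ c in nhdsWithin 1 (Set.Ioi 1), ψ c ∈ interior ((↑) ⁻¹' s) :=
    (hψ.tendsto 1).mono_left nhdsWithin_le_nhds |>.eventually
      (isOpen_interior.mem_nhds (hψ₁ ▸ hy))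
  obtain ⟨c, hc, hc₁⟩ := (hev.and self_mem_nhdsWithin).exists
  exact ⟨c, hc₁, interior_subset (s := ((↑) : affineSpan ℝ s → E) ⁻¹' s) hc⟩

theorem pos_of_mem_intrinsicInterior_stdSimplex {Θ : Type*} [Fintype Θ] {μ₀ : Θ → ℝ}
    (hμ₀ : μ₀ ∈ intrinsicInterior ℝ (stdSimplex ℝ Θ)) (θ : Θ) : 0 < μ₀ θ := by
  classical
  obtain ⟨c, hc, hmem⟩ :=
    exists_one_lt_lineMap_mem_of_mem_intrinsicInterior hμ₀ (single_mem_stdSimplex ℝ θ)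
  have := hmem.1 θ
  simp only [AffineMap.lineMap_apply, vsub_eq_sub, Pi.vadd_apply', Pi.smul_apply, Pi.sub_apply,
    Pi.single_eq_same, smul_eq_mul, vadd_eq_add] at this
  nlinarith

section SumOneProj

variable {Θ : Type*} [Fintype Θ]

def sumOneProjAlong (μ₀ : Θ → ℝ) : (Θ → ℝ) →ᵃ[ℝ] (Θ → ℝ) where
  toFun y := y + (1 - ∑ θ, y θ) • μ₀
  linear := LinearMap.id - (∑ θ, LinearMap.proj θ).smulRight μ₀
  map_vadd' p v := by
    simp only [vadd_eq_add, LinearMap.sub_apply, LinearMap.id_apply, LinearMap.smulRight_apply,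
      LinearMap.coe_sum, Finset.sum_apply, LinearMap.coe_proj, Function.eval, Pi.add_apply,
      Finset.sum_add_distrib]
    module

theorem sumOneProjAlong_apply (μ₀ y : Θ → ℝ) :
    sumOneProjAlong μ₀ y = y + (1 - ∑ θ, y θ) • μ₀ := rfl

theorem sumOneProjAlong_of_sum_eq_one (μ₀ : Θ → ℝ) {y : Θ → ℝ} (hy : ∑ θ, y θ = 1) :
    sumOneProjAlong μ₀ y = y := by
  simp [sumOneProjAlong_apply, hy]

theorem mem_interior_preimage_sumOneProjAlong_stdSimplex {μ₀ : Θ → ℝ} (hpos : ∀ θ, 0 < μ₀ θ)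
    (hsum : ∑ θ, μ₀ θ = 1) :
    μ₀ ∈ interior (sumOneProjAlong μ₀ ⁻¹' stdSimplex ℝ Θ) := by
  have hsub : sumOneProjAlong μ₀ ⁻¹' {z | ∀ θ, 0 < z θ} ⊆ sumOneProjAlong μ₀ ⁻¹' stdSimplex ℝ Θ :=
    fun y hy ↦ ⟨fun θ ↦ (hy θ).le, by
      simp [sumOneProjAlong_apply, Finset.sum_add_distrib, ← Finset.mul_sum, hsum]⟩
  refine interior_maximal hsub ?_ ?_
  · simp only [Set.ofPred_forall]
    exact (isOpen_iInter_of_finite fun θ ↦ isOpen_lt continuous_const (continuous_apply θ)).preimage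
      (sumOneProjAlong μ₀).continuous_of_finiteDimensional
  · simpa [sumOneProjAlong_of_sum_eq_one μ₀ hsum] using hpos

end SumOneProj

/-- shift-majorization, necessity: if for every probability measure `F`
on the simplex with barycenter `μ₀` (interior) one has `∫(V̂-V) dF ≥ V̂(μ₀) - V(μ₀)`,
then there is an affine `ℓ` with `V̂(μ₀) + ℓ(μ₀) = V(μ₀)` and `V̂ + ℓ ≥ V` on the simplex. -/
theorem stmt11 {Θ : Type*} [Fintype Θ] (Vhat V : (Θ → ℝ) → ℝ)
    (hVhat : ContinuousOn Vhat (stdSimplex ℝ Θ)) (hV : ContinuousOn V (stdSimplex ℝ Θ))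
    (μ₀ : Θ → ℝ) (hμ₀ : μ₀ ∈ intrinsicInterior ℝ (stdSimplex ℝ Θ))
    (h : ∀ F : Measure (Θ → ℝ), IsProbabilityMeasure F →
      F (stdSimplex ℝ Θ) = 1 → (∫ x, x ∂F = μ₀) →
      Vhat μ₀ - V μ₀ ≤ ∫ x, (Vhat x - V x) ∂F) :
    ∃ (l : Θ → ℝ) (τ : ℝ),
      Vhat μ₀ + ((∑ θ, l θ * μ₀ θ) + τ) = V μ₀ ∧
      ∀ μ ∈ stdSimplex ℝ Θ, V μ ≤ Vhat μ + ((∑ θ, l θ * μ θ) + τ) := by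
  classical
  set W : (Θ → ℝ) → ℝ := fun x ↦ Vhat x - V x
  set P := sumOneProjAlong μ₀
  have hfix : ∀ μ ∈ stdSimplex ℝ Θ, P μ = μ := fun μ hμ ↦ sumOneProjAlong_of_sum_eq_one μ₀ hμ.2
  have hμ₀Δ := intrinsicInterior_subset hμ₀
  have hW : ConvexEnvelopeEqAt (P ⁻¹' stdSimplex ℝ Θ) (W ∘ P) μ₀ :=
    ConvexEnvelopeEqAt.comp_affineMap P <| (hfix μ₀ hμ₀Δ).symm ▸
      convexEnvelopeEqAt_of_le_integral h
  have hbdd : BddAbove ((W ∘ P) '' (P ⁻¹' stdSimplex ℝ Θ)) :=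
    ((isCompact_stdSimplex ℝ Θ).image_of_continuousOn (hVhat.sub hV)).bddAbove.mono <| by
      rw [Set.image_comp]; exact Set.image_mono (Set.image_preimage_subset _ _)
  obtain ⟨g, hg⟩ := hW.exists_subgradient
    (mem_interior_preimage_sumOneProjAlong_stdSimplex
      (pos_of_mem_intrinsicInterior_stdSimplex hμ₀) hμ₀Δ.2) hbdd
  have hlin : ∀ μ : Θ → ℝ, ∑ θ, -g (Pi.single θ 1) * μ θ = -g μ := by
    intro μ
    conv_rhs => rw [pi_eq_sum_univ' μ]
    simp [map_sum, mul_comm]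
  refine ⟨fun θ ↦ -g (Pi.single θ 1), g μ₀ - W μ₀, ?_, fun μ hμ ↦ ?_⟩
  · rw [hlin]; simp only [W]; ring
  · have := hg μ (by simpa [hfix μ hμ] using hμ)
    simp only [Function.comp_apply, hfix μ hμ, hfix μ₀ hμ₀Δ, map_sub, W] at this
    rw [hlin]
    linarith
end

section
/- Let W : Δ → ℝ be continuous on the simplex Δ over a finite state space, and let W̆ be its lower convex envelope. For any μ₀ in the interior of Δ, if W̆(μ₀) < W(μ₀) then there exists a probability measure F on Δ with barycenter μ₀ such that ∫W dF < W(μ₀). -/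
/-!
Let `Q x` be the lowest height above `x` in the convex hull of the graph of `W` over the simplex.
Since `W` is bounded below on the compact simplex, `Q` is a real-valued convex minorant of `W`,
so `Q μ₀ ≤ W̆ μ₀ < W μ₀`. A point `(μ₀, t)` of the hull with `t < W μ₀` is a finite convex
combination `∑ wᵢ (xᵢ, W xᵢ)`, and `F = ∑ wᵢ δ_{xᵢ}` has barycenter `μ₀` and `∫ W dF = t`.
-/

open MeasureTheory Set
open scoped Pointwise

section LowerEnvelope

variable {E : Type*} [AddCommGroup E] [Module ℝ E] {s : Set E} {W : E → ℝ}

/-- The lower boundary of the convex hull of the graph of `W` on `s`; for convex `s` and `W`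
bounded below on `s` it is the lower convex envelope `W̆`. -/
noncomputable def lowerEnvelope (s : Set E) (W : E → ℝ) (x : E) : ℝ :=
  sInf (Prod.mk x ⁻¹' convexHull ℝ (s.graphOn W))

lemma mem_convexHull_graphOn_self {x : E} (hx : x ∈ s) :
    W x ∈ Prod.mk x ⁻¹' convexHull ℝ (s.graphOn W) :=
  subset_convexHull ℝ _ (mem_image_of_mem _ hx)

lemma convexHull_graphOn_subset_prod_Ici (hs : Convex ℝ s) {m : ℝ} (hm : ∀ y ∈ s, m ≤ W y) :
    convexHull ℝ (s.graphOn W) ⊆ s ×ˢ Ici m :=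
  convexHull_min (by rintro _ ⟨y, hy, rfl⟩; exact ⟨hy, hm y hy⟩) (hs.prod (convex_Ici m))

lemma bddBelow_preimage_convexHull_graphOn (hs : Convex ℝ s) (hW : BddBelow (W '' s)) (x : E) :
    BddBelow (Prod.mk x ⁻¹' convexHull ℝ (s.graphOn W)) := by
  obtain ⟨m, hm⟩ := hW
  exact ⟨m, fun t ht => (convexHull_graphOn_subset_prod_Ici hs
    (fun y hy => hm (mem_image_of_mem W hy)) ht).2⟩

lemma lowerEnvelope_le (hs : Convex ℝ s) (hW : BddBelow (W '' s)) {x : E} (hx : x ∈ s) :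
    lowerEnvelope s W x ≤ W x :=
  csInf_le (bddBelow_preimage_convexHull_graphOn hs hW x) (mem_convexHull_graphOn_self hx)

lemma convexOn_lowerEnvelope (hs : Convex ℝ s) (hW : BddBelow (W '' s)) :
    ConvexOn ℝ s (lowerEnvelope s W) := by
  refine ⟨hs, fun x hx y hy a b ha hb hab => ?_⟩
  set K := convexHull ℝ (s.graphOn W)
  have hbdd := bddBelow_preimage_convexHull_graphOn hs hW
  have hne : ∀ z ∈ s, (Prod.mk z ⁻¹' K).Nonempty := fun z hz => ⟨_, mem_convexHull_graphOn_self hz⟩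
  have hsub : a • (Prod.mk x ⁻¹' K) + b • (Prod.mk y ⁻¹' K) ⊆ Prod.mk (a • x + b • y) ⁻¹' K := by
    rintro _ ⟨_, ⟨t, ht, rfl⟩, _, ⟨r, hr, rfl⟩, rfl⟩
    simpa using convex_convexHull ℝ _ ht hr ha hb hab
  calc lowerEnvelope s W (a • x + b • y)
      ≤ sInf (a • (Prod.mk x ⁻¹' K) + b • (Prod.mk y ⁻¹' K)) :=
        csInf_le_csInf (hbdd _) (((hne x hx).smul_set).add (hne y hy).smul_set) hsub
    _ = a • lowerEnvelope s W x + b • lowerEnvelope s W y := by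
        rw [csInf_add ((hne x hx).smul_set) ((hbdd x).smul_of_nonneg ha) (hne y hy).smul_set
          ((hbdd y).smul_of_nonneg hb), Real.sInf_smul_of_nonneg ha, Real.sInf_smul_of_nonneg hb]
        rfl

lemma exists_sum_lt_of_lowerEnvelope_lt {x : E} (hx : x ∈ s) {c : ℝ} (hc : lowerEnvelope s W x < c) :
    ∃ (ι : Type) (_ : Fintype ι) (w : ι → ℝ) (z : ι → E), (∀ i, 0 ≤ w i) ∧ ∑ i, w i = 1 ∧
      (∀ i, z i ∈ s) ∧ ∑ i, w i • z i = x ∧ ∑ i, w i * W (z i) < c := by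
  obtain ⟨t, ht, htc⟩ := exists_lt_of_csInf_lt ⟨_, mem_convexHull_graphOn_self hx⟩ hc
  obtain ⟨ι, _, w, p, hw₀, hw₁, hp, hpt⟩ := mem_convexHull_iff_exists_fintype.1 ht
  choose z hz hzp using hp
  have hpz : p = fun i => (z i, W (z i)) := funext fun i => (hzp i).symm
  subst hpz
  refine ⟨ι, inferInstance, w, z, hw₀, hw₁, hz, ?_, ?_⟩
  · simpa [Prod.fst_sum] using congrArg Prod.fst hpt
  · simpa [Prod.snd_sum] using (congrArg Prod.snd hpt).trans_lt htc

end LowerEnvelope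

section DiracCombination

variable {α ι : Type*} [MeasurableSpace α] [Fintype ι] {w : ι → ℝ}

noncomputable def diracCombination (w : ι → ℝ) (z : ι → α) : Measure α :=
  ∑ i, ENNReal.ofReal (w i) • Measure.dirac (z i)

lemma diracCombination_apply_of_forall_mem (hw₀ : ∀ i, 0 ≤ w i) (hw₁ : ∑ i, w i = 1)
    {z : ι → α} {A : Set α} (hA : ∀ i, z i ∈ A) : diracCombination w z A = 1 := by
  simp only [diracCombination, Measure.coe_finsetSum, Finset.sum_apply, Measure.smul_apply,
    Measure.dirac_apply_of_mem (hA _), smul_eq_mul, mul_one]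
  rw [← ENNReal.ofReal_sum_of_nonneg fun i _ => hw₀ i, hw₁, ENNReal.ofReal_one]

lemma isProbabilityMeasure_diracCombination (hw₀ : ∀ i, 0 ≤ w i) (hw₁ : ∑ i, w i = 1)
    (z : ι → α) : IsProbabilityMeasure (diracCombination w z) :=
  ⟨diracCombination_apply_of_forall_mem hw₀ hw₁ fun i => mem_univ (z i)⟩

lemma integral_diracCombination [MeasurableSingletonClass α] {G : Type*} [NormedAddCommGroup G]
    [NormedSpace ℝ G] [CompleteSpace G] (hw₀ : ∀ i, 0 ≤ w i) (z : ι → α) (f : α → G) :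
    ∫ x, f x ∂diracCombination w z = ∑ i, w i • f (z i) := by
  rw [diracCombination, integral_finsetSum_measure fun i _ =>
    (integrable_dirac enorm_lt_top).smul_measure ENNReal.ofReal_ne_top]
  simp only [integral_smul_measure, integral_dirac, ENNReal.toReal_ofReal (hw₀ _)]

end DiracCombination

/-- if the lower convex envelope `W̆` of a continuous `W` on the simplex
satisfies `W̆(μ₀) < W(μ₀)` at an interior prior `μ₀`, then there is a probability
measure `F` on the simplex with barycenter `μ₀` and `∫W dF < W(μ₀)`. -/
theorem stmt12 {Θ : Type*} [Fintype Θ] (W : (Θ → ℝ) → ℝ)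
    (hW : ContinuousOn W (stdSimplex ℝ Θ))
    (μ₀ : Θ → ℝ) (hμ₀ : μ₀ ∈ intrinsicInterior ℝ (stdSimplex ℝ Θ))
    (henv : sSup {y : ℝ | ∃ g : (Θ → ℝ) → ℝ, ConvexOn ℝ (stdSimplex ℝ Θ) g ∧
        (∀ x ∈ stdSimplex ℝ Θ, g x ≤ W x) ∧ g μ₀ = y} < W μ₀) :
    ∃ F : Measure (Θ → ℝ), IsProbabilityMeasure F ∧
      F (stdSimplex ℝ Θ) = 1 ∧ (∫ x, x ∂F = μ₀) ∧
      (∫ x, W x ∂F) < W μ₀ := by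
  set Δ := stdSimplex ℝ Θ
  have hμ₀Δ : μ₀ ∈ Δ := intrinsicInterior_subset hμ₀
  have hΔ : Convex ℝ Δ := convex_stdSimplex ℝ Θ
  have hWbdd : BddBelow (W '' Δ) :=
    ((isCompact_stdSimplex ℝ Θ).image_of_continuousOn hW).isBounded.bddBelow
  have hminorants : BddAbove {y : ℝ | ∃ g : (Θ → ℝ) → ℝ, ConvexOn ℝ Δ g ∧
      (∀ x ∈ Δ, g x ≤ W x) ∧ g μ₀ = y} :=
    ⟨W μ₀, by rintro _ ⟨g, -, hgW, rfl⟩; exact hgW μ₀ hμ₀Δ⟩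
  have henvelope : lowerEnvelope Δ W μ₀ < W μ₀ :=
    (le_csSup hminorants ⟨_, convexOn_lowerEnvelope hΔ hWbdd,
      fun _ hx => lowerEnvelope_le hΔ hWbdd hx, rfl⟩).trans_lt henv
  obtain ⟨ι, _, w, z, hw₀, hw₁, hz, hbary, hlt⟩ := exists_sum_lt_of_lowerEnvelope_lt hμ₀Δ henvelope
  refine ⟨diracCombination w z, isProbabilityMeasure_diracCombination hw₀ hw₁ z,
    diracCombination_apply_of_forall_mem hw₀ hw₁ hz, ?_, ?_⟩
  · rwa [integral_diracCombination hw₀]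
  · simpa only [integral_diracCombination hw₀, smul_eq_mul] using hlt
end

section
/- Let Δ = [0,1] (two states), with V(μ) = max{a₁(μ), a₂(μ)} where a₁(μ) = (1-μ)α₁ + μβ₁ and a₂(μ) = (1-μ)α₂ + μβ₂, α₁ > α₂, β₂ > β₁. The unique indifference belief is μ₁ = (α₁-α₂)/((α₁-α₂)+(β₂-β₁)). Let φ : ℝ → ℝ be strictly increasing and strictly concave, and let μ̂₁ be the indifference belief for utilities φ∘u, i.e., μ̂₁ = (φ(α₁)-φ(α₂))/((φ(α₁)-φ(α₂))+(φ(β₂)-φ(β₁))). If μ̂₁ = μ₁, then for every sufficiently small ε > 0, replacing α₁ by α₁ - ε makes the φ-indifference belief strictly exceed the untransformed indifference belief: (φ(α₁-ε)-φ(α₂))/((φ(α₁-ε)-φ(α₂))+(φ(β₂)-φ(β₁))) > (α₁-ε-α₂)/((α₁-ε-α₂)+(β₂-β₁)). -/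
/-!
Write `a = α₁ - α₂`, `b = β₂ - β₁`, `f = φ α₁ - φ α₂`, `g = φ β₂ - φ β₁`. A belief of the
form `x / (x + y)` is compared with another one by cross-multiplying, so the hypothesis says
`f / a = g / b`. Lowering `α₁` to `α₁ - ε` with `0 < ε < a` moves the right end of the chord of
`φ` issued from `α₂` to the left, which by strict concavity strictly raises its slope above
`f / a = g / b`; cross-multiplying back gives the strict inequality between the beliefs.
-/

section IndifferenceBelief

variable {K : Type*} [Field K] [LinearOrder K] [IsStrictOrderedRing K] {x y u v : K}

theorem div_add_eq_div_add_iff (hxy : x + y ≠ 0) (huv : u + v ≠ 0) :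
    x / (x + y) = u / (u + v) ↔ x * v = u * y := by
  rw [div_eq_div_iff hxy huv]
  constructor <;> intro h <;> linear_combination h

theorem div_add_lt_div_add_iff (hxy : 0 < x + y) (huv : 0 < u + v) :
    u / (u + v) < x / (x + y) ↔ u * y < x * v := by
  rw [div_lt_div_iff₀ huv hxy]
  constructor <;> intro h <;> linarith

end IndifferenceBelief

/-- two-state decision problem under a strictly increasing, strictly
concave transformation `φ`. If the transformed indifference belief equals the original
one, then subtracting any sufficiently small `ε > 0` from `α₁` makes the transformed
indifference belief strictly exceed the untransformed one. -/
theorem stmt13 (α₁ α₂ β₁ β₂ : ℝ) (hα : α₂ < α₁) (hβ : β₁ < β₂)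
    (φ : ℝ → ℝ) (hmono : StrictMono φ) (hconc : StrictConcaveOn ℝ Set.univ φ)
    (heq : (φ α₁ - φ α₂) / ((φ α₁ - φ α₂) + (φ β₂ - φ β₁))
      = (α₁ - α₂) / ((α₁ - α₂) + (β₂ - β₁))) :
    ∃ ε₀ > (0 : ℝ), ∀ ε : ℝ, 0 < ε → ε < ε₀ →
      (φ (α₁ - ε) - φ α₂) / ((φ (α₁ - ε) - φ α₂) + (φ β₂ - φ β₁))
        > (α₁ - ε - α₂) / ((α₁ - ε - α₂) + (β₂ - β₁)) := by
  have hφα : φ α₂ < φ α₁ := hmono hα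
  have hφβ : φ β₁ < φ β₂ := hmono hβ
  have hcross : (φ α₁ - φ α₂) * (β₂ - β₁) = (α₁ - α₂) * (φ β₂ - φ β₁) :=
    (div_add_eq_div_add_iff (by linarith) (by linarith)).mp heq
  refine ⟨α₁ - α₂, sub_pos.mpr hα, fun ε hε hεa => ?_⟩
  have hφε : φ α₂ < φ (α₁ - ε) := hmono (by linarith)
  have hslope : (φ α₁ - φ α₂) / (α₁ - α₂) < (φ (α₁ - ε) - φ α₂) / (α₁ - ε - α₂) :=
    hconc.secant_strict_mono (Set.mem_univ _) (Set.mem_univ _) (Set.mem_univ _)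
      (by linarith) (by linarith) (by linarith)
  rw [div_lt_div_iff₀ (by linarith) (by linarith)] at hslope
  rw [gt_iff_lt, div_add_lt_div_add_iff (by linarith) (by linarith)]
  have hscaled : (α₁ - α₂) * ((α₁ - ε - α₂) * (φ β₂ - φ β₁))
      < (α₁ - α₂) * ((φ (α₁ - ε) - φ α₂) * (β₂ - β₁)) :=
    calc (α₁ - α₂) * ((α₁ - ε - α₂) * (φ β₂ - φ β₁))
        = (φ α₁ - φ α₂) * (α₁ - ε - α₂) * (β₂ - β₁) := by
          linear_combination (-(α₁ - ε - α₂)) * hcross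
      _ < (φ (α₁ - ε) - φ α₂) * (α₁ - α₂) * (β₂ - β₁) :=
          mul_lt_mul_of_pos_right hslope (sub_pos.mpr hβ)
      _ = (α₁ - α₂) * ((φ (α₁ - ε) - φ α₂) * (β₂ - β₁)) := by ring
  exact lt_of_mul_lt_mul_left hscaled (sub_pos.mpr hα).le
end
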